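/- arXiv:1805.07255 — 2 statements merged into one kernel-verified Lean document; each statement's English description precedes it below -/
import Mathlib

section
/- Discrete L∞ bound (Lemma 3.1): for every n with 0 ≤ n ≤ M+1 (so that n·Δt ≤ T), the solution of the scheme satisfies ‖uⁿ‖_∞ ≤ e^{γT}·(‖u⁰‖_∞ + A + B). -/
/-!
The scheme is monotone under the CFL condition: the upwind update
`b - λ (F(b, c) - F(a, b))` is nondecreasing in each of `a`, `b`, `c` and fixes constants,
so it does not increase the sup norm. The trapezoidal primitive `P_jⁿ` is bounded by
`j Δx ‖uⁿ‖_∞ ≤ ‖uⁿ‖_∞`, so one time step multiplies the interior values by at most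
`1 + γ Δt`, while the boundary values stay below `A` and `B`. Iterating gives the factor
`(1 + γ Δt)ⁿ ≤ e^{γ n Δt} ≤ e^{γ T}`.
-/

open Finset

noncomputable def discreteSupNorm (N : ℕ) (v : ℕ → ℝ) : ℝ :=
  (range (N + 1)).sup' nonempty_range_add_one fun j => |v j|

lemma abs_le_discreteSupNorm {N j : ℕ} (v : ℕ → ℝ) (hj : j ≤ N) :
    |v j| ≤ discreteSupNorm N v :=
  le_sup' (fun j => |v j|) (mem_range.mpr (Nat.lt_succ_of_le hj))

lemma discreteSupNorm_nonneg (N : ℕ) (v : ℕ → ℝ) : 0 ≤ discreteSupNorm N v :=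
  (abs_nonneg _).trans (abs_le_discreteSupNorm v (Nat.zero_le N))

lemma monotone_sub_mul_of_mul_deriv_le_one {G : ℝ → ℝ} {lam : ℝ} (hG : Differentiable ℝ G)
    (h : ∀ w, lam * deriv G w ≤ 1) : Monotone fun w => w - lam * G w :=
  monotone_of_deriv_nonneg (differentiable_id.sub (hG.const_mul lam)) fun w => by
    have hd : HasDerivAt (fun w => w - lam * G w) (1 - lam * deriv G w) w :=
      (hasDerivAt_id w).sub ((hG w).hasDerivAt.const_mul lam)
    linarith [hd.deriv, h w]

lemma abs_upwind_le {F₁ F₂ : ℝ → ℝ} {lam K a b c : ℝ} (hF₁ : Monotone F₁) (hF₂ : Antitone F₂)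
    (hlam : 0 ≤ lam) (hg : Monotone fun w => w - lam * (F₁ w - F₂ w))
    (ha : |a| ≤ K) (hb : |b| ≤ K) (hc : |c| ≤ K) :
    |b - lam * ((F₁ b + F₂ c) - (F₁ a + F₂ b))| ≤ K := by
  rw [abs_le] at ha hb hc ⊢
  constructor
  · have h₁ := mul_le_mul_of_nonneg_left (hF₁ ha.1) hlam
    have h₂ := mul_le_mul_of_nonneg_left (hF₂ hc.1) hlam
    linarith [hg hb.1]
  · have h₁ := mul_le_mul_of_nonneg_left (hF₁ ha.2) hlam
    have h₂ := mul_le_mul_of_nonneg_left (hF₂ hc.2) hlam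
    linarith [hg hb.2]

lemma abs_trapezoid_le {v : ℕ → ℝ} {K : ℝ} {j : ℕ} (hj : 1 ≤ j) (hv : ∀ i ≤ j, |v i| ≤ K) :
    |v 0 / 2 + ∑ i ∈ Ico 1 j, v i + v j / 2| ≤ j * K := by
  have hsum : |∑ i ∈ Ico 1 j, v i| ≤ (j - 1 : ℕ) * K := by
    calc |∑ i ∈ Ico 1 j, v i| ≤ ∑ i ∈ Ico 1 j, |v i| := abs_sum_le_sum_abs _ _
      _ ≤ (Ico 1 j).card • K := sum_le_card_nsmul _ _ _ fun i hi => hv i (mem_Ico.mp hi).2.le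
      _ = (j - 1 : ℕ) * K := by rw [Nat.card_Ico, nsmul_eq_mul]
  have hv₀ : |v 0 / 2| ≤ K / 2 := by rw [abs_div, abs_two]; linarith [hv 0 (Nat.zero_le j)]
  have hvj : |v j / 2| ≤ K / 2 := by rw [abs_div, abs_two]; linarith [hv j le_rfl]
  rw [Nat.cast_sub hj, Nat.cast_one] at hsum
  calc |v 0 / 2 + ∑ i ∈ Ico 1 j, v i + v j / 2|
      ≤ |v 0 / 2| + |∑ i ∈ Ico 1 j, v i| + |v j / 2| :=
        (abs_add_le _ _).trans (add_le_add_left (abs_add_le _ _) _)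
    _ ≤ j * K := by linarith

lemma discreteSupNorm_step_le {N : ℕ} {F₁ F₂ : ℝ → ℝ} {lam γ Δt Δx A B : ℝ} {v w : ℕ → ℝ}
    (hF₁ : Monotone F₁) (hF₂ : Antitone F₂) (hlam : 0 ≤ lam)
    (hg : Monotone fun w => w - lam * (F₁ w - F₂ w)) (hγΔt : 0 ≤ γ * Δt) (hΔx : Δx = 1 / N)
    (hstep : ∀ j, 1 ≤ j → j ≤ N - 1 →
      w j = v j - lam * ((F₁ (v j) + F₂ (v (j + 1))) - (F₁ (v (j - 1)) + F₂ (v j)))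
        + γ * Δt * (Δx * (v 0 / 2 + ∑ i ∈ Ico 1 j, v i + v j / 2)))
    (hw₀ : |w 0| ≤ A) (hwN : |w N| ≤ B) :
    discreteSupNorm N w ≤ max (max A B) ((1 + γ * Δt) * discreteSupNorm N v) := by
  refine sup'_le _ _ fun j hj => ?_
  have hjN := Nat.lt_succ_iff.mp (mem_range.mp hj)
  obtain rfl | hj₀ := Nat.eq_zero_or_pos j
  · exact hw₀.trans ((le_max_left _ _).trans (le_max_left _ _))
  obtain rfl | hjN' := eq_or_lt_of_le hjN
  · exact hwN.trans ((le_max_right _ _).trans (le_max_left _ _))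
  refine le_max_of_le_right ?_
  set K := discreteSupNorm N v
  have hK : ∀ i ≤ N, |v i| ≤ K := fun i hi => abs_le_discreteSupNorm v hi
  have hupwind := abs_upwind_le hF₁ hF₂ hlam hg
    (hK (j - 1) (by omega)) (hK j hjN) (hK (j + 1) (by omega))
  have hP : |Δx * (v 0 / 2 + ∑ i ∈ Ico 1 j, v i + v j / 2)| ≤ K := by
    have hN : (0 : ℝ) < N := by exact_mod_cast hj₀.trans hjN'
    have hΔx₀ : 0 ≤ Δx := by rw [hΔx]; positivity
    rw [abs_mul, abs_of_nonneg hΔx₀]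
    calc Δx * |v 0 / 2 + ∑ i ∈ Ico 1 j, v i + v j / 2|
        ≤ Δx * (j * K) :=
          mul_le_mul_of_nonneg_left (abs_trapezoid_le hj₀ fun i hi => hK i (hi.trans hjN)) hΔx₀
      _ ≤ Δx * (N * K) := by gcongr; exact discreteSupNorm_nonneg N v
      _ = K := by rw [hΔx]; field_simp
  rw [hstep j hj₀ (by omega)]
  refine (abs_add_le _ _).trans ?_
  rw [abs_mul, abs_of_nonneg hγΔt]
  linarith [mul_le_mul_of_nonneg_left hP hγΔt]

lemma le_pow_mul_max_of_le_max {a : ℕ → ℝ} {q C : ℝ} {m : ℕ} (hq : 1 ≤ q) (hC : 0 ≤ C)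
    (ha : ∀ n < m, a (n + 1) ≤ max C (q * a n)) : a m ≤ q ^ m * max (a 0) C := by
  induction m with
  | zero => simp
  | succ n ih =>
    have ih := ih fun k hk => ha k (Nat.lt_succ_of_lt hk)
    have hM : 0 ≤ max (a 0) C := le_max_of_le_right hC
    refine (ha n n.lt_succ_self).trans (max_le ?_ ?_)
    · calc C ≤ max (a 0) C := le_max_right _ _
        _ ≤ q ^ (n + 1) * max (a 0) C := le_mul_of_one_le_left hM (one_le_pow₀ hq)
    · calc q * a n ≤ q * (q ^ n * max (a 0) C) := mul_le_mul_of_nonneg_left ih (by linarith)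
        _ = q ^ (n + 1) * max (a 0) C := by ring

lemma one_add_pow_le_exp {x y : ℝ} {n : ℕ} (hx : 0 ≤ x) (h : n * x ≤ y) :
    (1 + x) ^ n ≤ Real.exp y :=
  calc (1 + x) ^ n ≤ Real.exp x ^ n := by
        gcongr
        linarith [Real.add_one_le_exp x]
    _ = Real.exp (n * x) := (Real.exp_nat_mul x n).symm
    _ ≤ Real.exp y := Real.exp_le_exp.mpr h

theorem stmt_1_general (N M : ℕ) (T γ Δx Δt lam : ℝ)
    (hT : 0 < T) (hγ : 0 < γ)
    (hΔx : Δx = 1 / N) (hΔt : Δt = T / (M + 1)) (hlam : lam = Δt / Δx)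
    (F₁ F₂ : ℝ → ℝ) (hF₁ : ContDiff ℝ 1 F₁) (hF₂ : ContDiff ℝ 1 F₂)
    (hmono₁ : ∀ w, 0 ≤ deriv F₁ w) (hmono₂ : ∀ w, deriv F₂ w ≤ 0)
    (hCFL : ∀ w, lam * (deriv F₁ w - deriv F₂ w) ≤ 1)
    (u : ℕ → ℕ → ℝ) (P : ℕ → ℕ → ℝ)
    (hP : ∀ n j, P n j = Δx * (u n 0 / 2 + ∑ i ∈ Finset.Ico 1 j, u n i + u n j / 2))
    (hscheme : ∀ n, n ≤ M → ∀ j, 1 ≤ j → j ≤ N - 1 →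
      u (n + 1) j = u n j
        - lam * ((F₁ (u n j) + F₂ (u n (j + 1))) - (F₁ (u n (j - 1)) + F₂ (u n j)))
        + γ * Δt * P n j)
    (A B : ℝ) (hA : 0 ≤ A) (hB : 0 ≤ B)
    (hbdL : ∀ n, n ≤ M + 1 → |u n 0| ≤ A)
    (hbdR : ∀ n, n ≤ M + 1 → |u n N| ≤ B) :
    ∀ n, n ≤ M + 1 →
      (Finset.range (N + 1)).sup' Finset.nonempty_range_add_one (fun j => |u n j|)
        ≤ Real.exp (γ * T) *
          ((Finset.range (N + 1)).sup' Finset.nonempty_range_add_one (fun j => |u 0 j|)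
            + A + B) := by
  intro n hn
  have hΔt₀ : 0 ≤ Δt := by rw [hΔt]; positivity
  have hlam₀ : 0 ≤ lam := by rw [hlam, hΔx]; positivity
  have hd₁ := hF₁.differentiable one_ne_zero
  have hd₂ := hF₂.differentiable one_ne_zero
  have hg : Monotone fun w => w - lam * (F₁ w - F₂ w) :=
    monotone_sub_mul_of_mul_deriv_le_one (hd₁.sub hd₂) fun w => by
      rw [deriv_fun_sub (hd₁ w) (hd₂ w)]; exact hCFL w
  have hstep : ∀ k < n, discreteSupNorm N (u (k + 1))
      ≤ max (max A B) ((1 + γ * Δt) * discreteSupNorm N (u k)) := fun k hk =>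
    discreteSupNorm_step_le (monotone_of_deriv_nonneg hd₁ hmono₁)
      (antitone_of_deriv_nonpos hd₂ hmono₂) hlam₀ hg (by positivity) hΔx
      (fun j hj₁ hj₂ => by rw [hscheme k (by omega) j hj₁ hj₂, hP])
      (hbdL _ (by omega)) (hbdR _ (by omega))
  have hnΔt : n * (γ * Δt) ≤ γ * T := by
    have : (n : ℝ) ≤ M + 1 := by exact_mod_cast hn
    rw [hΔt, mul_div_assoc', mul_div_assoc', div_le_iff₀ (by positivity)]
    linarith [mul_le_mul_of_nonneg_right this (by positivity : 0 ≤ γ * T)]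
  have hK₀ := discreteSupNorm_nonneg N (u 0)
  calc discreteSupNorm N (u n)
      ≤ (1 + γ * Δt) ^ n * max (discreteSupNorm N (u 0)) (max A B) :=
        le_pow_mul_max_of_le_max (a := fun k => discreteSupNorm N (u k))
          (le_add_of_nonneg_right (by positivity : 0 ≤ γ * Δt)) (le_max_of_le_left hA) hstep
    _ ≤ Real.exp (γ * T) * (discreteSupNorm N (u 0) + A + B) :=
        mul_le_mul (one_add_pow_le_exp (by positivity) hnΔt)
          (max_le (by linarith) (max_le (by linarith) (by linarith)))
          (le_max_of_le_left hK₀) (Real.exp_pos _).le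

/-- Discrete L∞ bound (Lemma 3.1): for every `n ≤ M + 1` (so that `n Δt ≤ T`),
the solution of the finite difference scheme for the Ostrovsky--Hunter equation
satisfies `‖uⁿ‖_∞ ≤ e^{γT} (‖u⁰‖_∞ + A + B)`, where `A`, `B` bound the boundary
values. Here `u n j` denotes `u_jⁿ`. -/
theorem stmt_1 (N M : ℕ) (hN : 2 ≤ N) (T γ Δx Δt lam : ℝ)
    (hT : 0 < T) (hγ : 0 < γ)
    (hΔx : Δx = 1 / N) (hΔt : Δt = T / (M + 1)) (hlam : lam = Δt / Δx)
    (F₁ F₂ : ℝ → ℝ) (hF₁ : ContDiff ℝ 1 F₁) (hF₂ : ContDiff ℝ 1 F₂)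
    (hmono₁ : ∀ w, 0 ≤ deriv F₁ w) (hmono₂ : ∀ w, deriv F₂ w ≤ 0)
    (hCFL : ∀ w, lam * (deriv F₁ w - deriv F₂ w) ≤ 1)
    (u : ℕ → ℕ → ℝ) (P : ℕ → ℕ → ℝ)
    (hP : ∀ n j, P n j = Δx * (u n 0 / 2 + ∑ i ∈ Finset.Ico 1 j, u n i + u n j / 2))
    (hscheme : ∀ n, n ≤ M → ∀ j, 1 ≤ j → j ≤ N - 1 →
      u (n + 1) j = u n j
        - lam * ((F₁ (u n j) + F₂ (u n (j + 1))) - (F₁ (u n (j - 1)) + F₂ (u n j)))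
        + γ * Δt * P n j)
    (A B : ℝ) (hA : 0 ≤ A) (hB : 0 ≤ B)
    (hbdL : ∀ n, n ≤ M + 1 → |u n 0| ≤ A)
    (hbdR : ∀ n, n ≤ M + 1 → |u n N| ≤ B) :
    ∀ n, n ≤ M + 1 →
      (Finset.range (N + 1)).sup' Finset.nonempty_range_add_one (fun j => |u n j|)
        ≤ Real.exp (γ * T) *
          ((Finset.range (N + 1)).sup' Finset.nonempty_range_add_one (fun j => |u 0 j|)
            + A + B) :=
  stmt_1_general N M T γ Δx Δt lam hT hγ hΔx hΔt hlam F₁ F₂ hF₁ hF₂ hmono₁ hmono₂ hCFL u P hP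
    hscheme A B hA hB hbdL hbdR
end

section
/- Discrete BV bound (Lemma 3.2): there exists a constant C_T, depending only on γ and T, such that for every n with 0 ≤ n ≤ M+1 the solution of the scheme satisfies |uⁿ|_{BV} ≤ C_T·(|u⁰|_{BV} + V_α + V_β + ‖u⁰‖_∞ + A + B); one may take C_T = max(1, 3γT e^{γT}). -/
/-!
The update `b - λ (F(b, c) - F(a, b))` is nondecreasing in each of `a, b, c` by the sign
conditions on `F₁', F₂'` and the CFL condition, and it fixes constants. This gives a maximum
principle, so the source `γ Δt P` makes the sup norm grow by at most a factor `1 + γΔt` per step,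
hence at most by `e^{γT}`. Writing the identity as the sum of the three monotone pieces
`b ↦ b - λ(F₁ b - F₂ b)`, `λ F₁` and `-λ F₂` splits every increment of `u` into three increments
of the same sign, which makes the flux part of the step TV-diminishing (Harten). The source term
and the boundary values add at most `3 γ Δt ‖uⁿ‖_∞ + |u₀ⁿ⁺¹ - u₀ⁿ| + |u_Nⁿ⁺¹ - u_Nⁿ|` per step.
-/

open Finset

def discreteTV (N : ℕ) (v : ℕ → ℝ) : ℝ :=
  ∑ j ∈ range N, |v (j + 1) - v j|

namespace discreteTV

variable {N : ℕ}

theorem nonneg (v : ℕ → ℝ) : 0 ≤ discreteTV N v :=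
  sum_nonneg fun _ _ => abs_nonneg _

theorem succ (v : ℕ → ℝ) : discreteTV (N + 1) v = discreteTV N v + |v (N + 1) - v N| :=
  sum_range_succ _ _

theorem add_le (f g : ℕ → ℝ) : discreteTV N (f + g) ≤ discreteTV N f + discreteTV N g := by
  rw [discreteTV, discreteTV, discreteTV, ← sum_add_distrib]
  gcongr with j
  simpa only [Pi.add_apply, add_sub_add_comm] using abs_add_le (f (j + 1) - f j) (g (j + 1) - g j)

theorem sub_le (f g : ℕ → ℝ) : discreteTV N (f - g) ≤ discreteTV N f + discreteTV N g := by
  rw [discreteTV, discreteTV, discreteTV, ← sum_add_distrib]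
  gcongr with j
  simpa only [Pi.sub_apply, sub_sub_sub_comm] using abs_sub (f (j + 1) - f j) (g (j + 1) - g j)

theorem smul (c : ℝ) (f : ℕ → ℝ) : discreteTV N (c • f) = |c| * discreteTV N f := by
  simp only [discreteTV, mul_sum, Pi.smul_apply, smul_eq_mul, ← mul_sub, abs_mul]

theorem abs_sub_le_sum_Ico (v : ℕ → ℝ) {a b : ℕ} (hab : a ≤ b) :
    |v b - v a| ≤ ∑ i ∈ Ico a b, |v (i + 1) - v i| := by
  induction b, hab using Nat.le_induction with
  | base => simp
  | succ b hab ih =>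
    rw [sum_Ico_succ_top hab]
    calc |v (b + 1) - v a| ≤ |v b - v a| + |v (b + 1) - v b| :=
          (abs_sub_le _ (v b) _).trans_eq (add_comm _ _)
      _ ≤ _ := by gcongr

theorem comp_le (v : ℕ → ℝ) {σ : ℕ → ℕ} (hσ : Monotone σ) (hσN : σ N ≤ N) :
    discreteTV N (v ∘ σ) ≤ discreteTV N v := by
  have telescope : ∀ n, discreteTV n (v ∘ σ) ≤ ∑ i ∈ Ico (σ 0) (σ n), |v (i + 1) - v i| := by
    intro n
    induction n with
    | zero => simp [discreteTV]
    | succ n ih =>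
      rw [succ, ← sum_Ico_consecutive _ (hσ n.zero_le) (hσ n.le_succ)]
      exact add_le_add ih (abs_sub_le_sum_Ico v (hσ n.le_succ))
  refine (telescope N).trans (sum_le_sum_of_subset_of_nonneg ?_ fun _ _ _ => abs_nonneg _)
  intro i hi
  rw [mem_Ico] at hi
  exact mem_range.2 (by omega)

theorem le_of_eq_zero_interior {d : ℕ → ℝ} (hN : 0 < N) (hd : ∀ j, 0 < j → j < N → d j = 0) :
    discreteTV N d ≤ |d 0| + |d N| := by
  obtain ⟨n, rfl⟩ : ∃ n, N = n + 1 := ⟨N - 1, by omega⟩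
  have hfirst : ∑ j ∈ range (n + 1), |d j| = |d 0| :=
    sum_eq_single_of_mem 0 (by simp) fun j hj hj0 => by
      rw [hd j (by omega) (mem_range.1 hj), abs_zero]
  have hlast : ∑ j ∈ range (n + 1), |d (j + 1)| = |d (n + 1)| :=
    sum_eq_single_of_mem n (by simp) fun j hj hjn => by
      rw [hd (j + 1) (by omega) (by have := mem_range.1 hj; omega), abs_zero]
  calc discreteTV (n + 1) d ≤ ∑ j ∈ range (n + 1), (|d (j + 1)| + |d j|) :=
        sum_le_sum fun j _ => abs_sub _ _
    _ = |d 0| + |d (n + 1)| := by rw [sum_add_distrib, hfirst, hlast, add_comm]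

theorem le_of_eqOn_interior {e p : ℕ → ℝ} (hN : 0 < N) (h : ∀ j, 0 < j → j < N → e j = p j) :
    discreteTV N e ≤ discreteTV N p + |e 0 - p 0| + |e N - p N| := by
  have hd := le_of_eq_zero_interior (d := e - p) hN fun j hj0 hjN => sub_eq_zero.2 (h j hj0 hjN)
  have := add_le (N := N) p (e - p)
  rw [add_sub_cancel] at this
  simp only [Pi.sub_apply] at hd
  linarith

end discreteTV

def gridSupNorm (N : ℕ) (v : ℕ → ℝ) : ℝ :=
  (range (N + 1)).sup' nonempty_range_add_one fun j => |v j|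

section gridSupNorm

variable {N : ℕ} {v : ℕ → ℝ}

theorem abs_le_gridSupNorm {j : ℕ} (hj : j ≤ N) : |v j| ≤ gridSupNorm N v :=
  le_sup' (fun j => |v j|) (mem_range.2 (Nat.lt_succ_of_le hj))

theorem gridSupNorm_nonneg : 0 ≤ gridSupNorm N v :=
  (abs_nonneg _).trans (abs_le_gridSupNorm N.zero_le)

theorem gridSupNorm_le {k : ℝ} (h : ∀ j ≤ N, |v j| ≤ k) : gridSupNorm N v ≤ k :=
  sup'_le _ _ fun j hj => h j (Nat.le_of_lt_succ (mem_range.1 hj))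

end gridSupNorm

/-- Trapezoidal rule for `∫₀^{x_j} v` on the grid `x_i = i Δx`. -/
noncomputable def trapezoidSum (Δx : ℝ) (v : ℕ → ℝ) (j : ℕ) : ℝ :=
  Δx * (v 0 / 2 + ∑ i ∈ Ico 1 j, v i + v j / 2)

section trapezoidSum

variable {N : ℕ} {Δx k : ℝ} {v : ℕ → ℝ}

theorem abs_trapezoidSum_le (hΔx : 0 ≤ Δx) (hNΔx : N * Δx ≤ 1) (hN : 0 < N)
    (hv : ∀ i ≤ N, |v i| ≤ k) {j : ℕ} (hj : j ≤ N) : |trapezoidSum Δx v j| ≤ k := by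
  have hk : 0 ≤ k := (abs_nonneg _).trans (hv 0 N.zero_le)
  have hjΔx : j * Δx ≤ 1 := le_trans (by gcongr) hNΔx
  rw [trapezoidSum, abs_mul, abs_of_nonneg hΔx]
  rcases Nat.eq_zero_or_pos j with rfl | hj0
  · have hΔx1 : Δx ≤ 1 := le_trans (le_mul_of_one_le_left hΔx (by exact_mod_cast hN)) hNΔx
    rw [Ico_eq_empty_of_le zero_le_one, sum_empty, add_zero, add_halves]
    exact (mul_le_mul hΔx1 (hv 0 N.zero_le) (abs_nonneg _) zero_le_one).trans_eq (one_mul k)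
  have hsum : ∑ i ∈ Ico 1 j, |v i| ≤ (j - 1 : ℝ) * k := by
    have := sum_le_card_nsmul (Ico 1 j) (fun i => |v i|) k fun i hi => hv i (by
      have := mem_Ico.1 hi; omega)
    rwa [Nat.card_Ico, nsmul_eq_mul, Nat.cast_sub hj0, Nat.cast_one] at this
  calc Δx * |v 0 / 2 + ∑ i ∈ Ico 1 j, v i + v j / 2|
      ≤ Δx * (|v 0| / 2 + ∑ i ∈ Ico 1 j, |v i| + |v j| / 2) := by
        gcongr
        refine (abs_add_three _ _ _).trans ?_
        rw [abs_div, abs_div, abs_two]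
        gcongr
        exact abs_sum_le_sum_abs _ _
    _ ≤ Δx * (k / 2 + (j - 1) * k + k / 2) := by
        gcongr
        · exact hv 0 N.zero_le
        · exact hv j hj
    _ = j * Δx * k := by ring
    _ ≤ k := mul_le_of_le_one_left hk hjΔx

theorem abs_trapezoidSum_succ_sub_le (hΔx : 0 ≤ Δx) {j : ℕ} (hj : |v j| ≤ k)
    (hj' : |v (j + 1)| ≤ k) : |trapezoidSum Δx v (j + 1) - trapezoidSum Δx v j| ≤ Δx * k := by
  rcases Nat.eq_zero_or_pos j with rfl | hj0
  · have : trapezoidSum Δx v 1 - trapezoidSum Δx v 0 = Δx * ((v 1 - v 0) / 2) := by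
      simp only [trapezoidSum, Ico_self, Ico_eq_empty_of_le zero_le_one, sum_empty]; ring
    rw [this, abs_mul, abs_of_nonneg hΔx, abs_div, abs_two]
    gcongr
    linarith [abs_sub (v 1) (v 0)]
  · have : trapezoidSum Δx v (j + 1) - trapezoidSum Δx v j = Δx * ((v j + v (j + 1)) / 2) := by
      rw [trapezoidSum, trapezoidSum, sum_Ico_succ_top hj0]; ring
    rw [this, abs_mul, abs_of_nonneg hΔx, abs_div, abs_two]
    gcongr
    linarith [abs_add_le (v j) (v (j + 1))]

theorem discreteTV_trapezoidSum_le (hΔx : 0 ≤ Δx) (hNΔx : N * Δx ≤ 1)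
    (hv : ∀ i ≤ N, |v i| ≤ k) : discreteTV N (trapezoidSum Δx v) ≤ k := by
  have hk : 0 ≤ k := (abs_nonneg _).trans (hv 0 N.zero_le)
  calc discreteTV N (trapezoidSum Δx v) ≤ N * (Δx * k) := by
        simpa [discreteTV] using sum_le_card_nsmul (range N) _ (Δx * k) fun j hj => by
          rw [mem_range] at hj
          exact abs_trapezoidSum_succ_sub_le hΔx (hv j hj.le) (hv (j + 1) hj)
    _ = N * Δx * k := by ring
    _ ≤ k := mul_le_of_le_one_left hk hNΔx

end trapezoidSum

/-- The update `b ↦ b - λ (F(b, c) - F(a, b))` of the scheme with split flux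
`F(u, v) = F₁ u + F₂ v`, at a node with left neighbour `a` and right neighbour `c`. -/
def splitFluxUpdate (lam : ℝ) (F₁ F₂ : ℝ → ℝ) (a b c : ℝ) : ℝ :=
  b - lam * ((F₁ b + F₂ c) - (F₁ a + F₂ b))

def splitFluxCentral (lam : ℝ) (F₁ F₂ : ℝ → ℝ) (b : ℝ) : ℝ :=
  b - lam * (F₁ b - F₂ b)

theorem splitFluxUpdate_eq (lam : ℝ) (F₁ F₂ : ℝ → ℝ) (a b c : ℝ) :
    splitFluxUpdate lam F₁ F₂ a b c = splitFluxCentral lam F₁ F₂ b + lam * F₁ a - lam * F₂ c := by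
  simp only [splitFluxUpdate, splitFluxCentral]; ring

theorem splitFluxUpdate_self (lam : ℝ) (F₁ F₂ : ℝ → ℝ) (b : ℝ) :
    splitFluxUpdate lam F₁ F₂ b b b = b := by
  simp only [splitFluxUpdate]; ring

/-- The conditions making `splitFluxUpdate lam F₁ F₂` nondecreasing in each argument. -/
structure MonotoneFluxSplitting (lam : ℝ) (F₁ F₂ : ℝ → ℝ) : Prop where
  nonneg : 0 ≤ lam
  monotone_fst : Monotone F₁
  antitone_snd : Antitone F₂
  monotone_central : Monotone (splitFluxCentral lam F₁ F₂)

theorem MonotoneFluxSplitting.of_deriv {lam : ℝ} {F₁ F₂ : ℝ → ℝ} (hlam : 0 ≤ lam)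
    (hF₁ : Differentiable ℝ F₁) (hF₂ : Differentiable ℝ F₂)
    (h₁ : ∀ w, 0 ≤ deriv F₁ w) (h₂ : ∀ w, deriv F₂ w ≤ 0)
    (hCFL : ∀ w, lam * (deriv F₁ w - deriv F₂ w) ≤ 1) : MonotoneFluxSplitting lam F₁ F₂ where
  nonneg := hlam
  monotone_fst := monotone_of_deriv_nonneg hF₁ h₁
  antitone_snd := antitone_of_deriv_nonpos hF₂ h₂
  monotone_central := by
    have hderiv : ∀ w, HasDerivAt (splitFluxCentral lam F₁ F₂)
        (1 - lam * (deriv F₁ w - deriv F₂ w)) w := fun w =>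
      (hasDerivAt_id w).sub (((hF₁ w).hasDerivAt.sub (hF₂ w).hasDerivAt).const_mul lam)
    exact monotone_of_deriv_nonneg (fun w => (hderiv w).differentiableAt) fun w => by
      rw [(hderiv w).deriv]; linarith [hCFL w]

namespace MonotoneFluxSplitting

variable {lam : ℝ} {F₁ F₂ : ℝ → ℝ} (hS : MonotoneFluxSplitting lam F₁ F₂)
include hS

theorem splitFluxUpdate_le {a b c a' b' c' : ℝ} (ha : a ≤ a') (hb : b ≤ b') (hc : c ≤ c') :
    splitFluxUpdate lam F₁ F₂ a b c ≤ splitFluxUpdate lam F₁ F₂ a' b' c' := by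
  rw [splitFluxUpdate_eq, splitFluxUpdate_eq]
  have h₁ := mul_le_mul_of_nonneg_left (hS.monotone_fst ha) hS.nonneg
  have h₂ := mul_le_mul_of_nonneg_left (hS.antitone_snd hc) hS.nonneg
  linarith [hS.monotone_central hb]

theorem abs_splitFluxUpdate_le {a b c k : ℝ} (ha : |a| ≤ k) (hb : |b| ≤ k) (hc : |c| ≤ k) :
    |splitFluxUpdate lam F₁ F₂ a b c| ≤ k := by
  rw [abs_le] at *
  constructor
  · simpa only [splitFluxUpdate_self] using hS.splitFluxUpdate_le ha.1 hb.1 hc.1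
  · simpa only [splitFluxUpdate_self] using hS.splitFluxUpdate_le ha.2 hb.2 hc.2

/-- Each increment of the identity splits into increments of the same sign. -/
theorem abs_sub_eq (a b : ℝ) :
    |b - a| = |splitFluxCentral lam F₁ F₂ b - splitFluxCentral lam F₁ F₂ a|
      + lam * |F₁ b - F₁ a| + lam * |F₂ b - F₂ a| := by
  have hid : ∀ w, splitFluxCentral lam F₁ F₂ w + lam * F₁ w - lam * F₂ w = w := fun w => by
    simp only [splitFluxCentral]; ring
  rcases le_total a b with h | h
  · rw [abs_of_nonneg (sub_nonneg.2 h), abs_of_nonneg (sub_nonneg.2 (hS.monotone_central h)),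
      abs_of_nonneg (sub_nonneg.2 (hS.monotone_fst h)),
      abs_of_nonpos (sub_nonpos.2 (hS.antitone_snd h))]
    linarith [hid a, hid b]
  · rw [abs_of_nonpos (sub_nonpos.2 h), abs_of_nonpos (sub_nonpos.2 (hS.monotone_central h)),
      abs_of_nonpos (sub_nonpos.2 (hS.monotone_fst h)),
      abs_of_nonneg (sub_nonneg.2 (hS.antitone_snd h))]
    linarith [hid a, hid b]

theorem discreteTV_eq (N : ℕ) (v : ℕ → ℝ) :
    discreteTV N v = discreteTV N (splitFluxCentral lam F₁ F₂ ∘ v)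
      + lam * discreteTV N (F₁ ∘ v) + lam * discreteTV N (F₂ ∘ v) := by
  simp only [discreteTV, mul_sum, ← sum_add_distrib, Function.comp]
  exact sum_congr rfl fun j _ => hS.abs_sub_eq _ _

end MonotoneFluxSplitting

def fluxStep (lam : ℝ) (F₁ F₂ : ℝ → ℝ) (N : ℕ) (v : ℕ → ℝ) (j : ℕ) : ℝ :=
  if 0 < j ∧ j < N then splitFluxUpdate lam F₁ F₂ (v (j - 1)) (v j) (v (j + 1)) else v j

/-- Harten's argument: after a monotone reindexing `σ`, `τ` of the neighbours (frozen at the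
boundary) the step reads `G ∘ v + λ F₁ ∘ v ∘ σ - λ F₂ ∘ v ∘ τ` with `G = splitFluxCentral lam F₁ F₂`,
and the variations of `G ∘ v`, `λ F₁ ∘ v`, `λ F₂ ∘ v` add up to that of `v`. -/
theorem MonotoneFluxSplitting.discreteTV_fluxStep_le {lam : ℝ} {F₁ F₂ : ℝ → ℝ}
    (hS : MonotoneFluxSplitting lam F₁ F₂) (N : ℕ) (v : ℕ → ℝ) :
    discreteTV N (fluxStep lam F₁ F₂ N v) ≤ discreteTV N v := by
  set σ : ℕ → ℕ := fun j => if 0 < j ∧ j < N then j - 1 else j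
  set τ : ℕ → ℕ := fun j => if 0 < j ∧ j < N then j + 1 else j
  have hσ : Monotone σ := fun a b h => by simp only [σ]; split_ifs <;> omega
  have hτ : Monotone τ := fun a b h => by simp only [τ]; split_ifs <;> omega
  have hrepr : fluxStep lam F₁ F₂ N v =
      splitFluxCentral lam F₁ F₂ ∘ v + lam • ((F₁ ∘ v) ∘ σ) - lam • ((F₂ ∘ v) ∘ τ) := by
    funext j
    simp only [fluxStep, σ, τ, Pi.add_apply, Pi.sub_apply, Pi.smul_apply, Function.comp,
      smul_eq_mul]
    split_ifs
    · exact splitFluxUpdate_eq lam F₁ F₂ _ _ _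
    · simp only [splitFluxCentral]; ring
  calc discreteTV N (fluxStep lam F₁ F₂ N v)
      ≤ discreteTV N (splitFluxCentral lam F₁ F₂ ∘ v) + lam * discreteTV N ((F₁ ∘ v) ∘ σ)
          + lam * discreteTV N ((F₂ ∘ v) ∘ τ) := by
        rw [hrepr]
        refine (discreteTV.sub_le _ _).trans ?_
        grw [discreteTV.add_le]
        simp only [discreteTV.smul, abs_of_nonneg hS.nonneg, le_refl]
    _ ≤ discreteTV N (splitFluxCentral lam F₁ F₂ ∘ v) + lam * discreteTV N (F₁ ∘ v)
          + lam * discreteTV N (F₂ ∘ v) := by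
        have := hS.nonneg
        gcongr
        · exact discreteTV.comp_le _ hσ (by simp [σ])
        · exact discreteTV.comp_le _ hτ (by simp [τ])
    _ = discreteTV N v := (hS.discreteTV_eq N v).symm

def SchemeStep (lam : ℝ) (F₁ F₂ : ℝ → ℝ) (N : ℕ) (c Δx : ℝ) (v w : ℕ → ℝ) : Prop :=
  ∀ j, 0 < j → j < N →
    w j = splitFluxUpdate lam F₁ F₂ (v (j - 1)) (v j) (v (j + 1)) + c * trapezoidSum Δx v j

section SchemeStep

variable {lam c Δx k : ℝ} {F₁ F₂ : ℝ → ℝ} {N : ℕ} {v w : ℕ → ℝ}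

theorem SchemeStep.abs_le (h : SchemeStep lam F₁ F₂ N c Δx v w)
    (hS : MonotoneFluxSplitting lam F₁ F₂) (hc : 0 ≤ c) (hΔx : 0 ≤ Δx) (hNΔx : N * Δx ≤ 1)
    (hv : ∀ i ≤ N, |v i| ≤ k) {j : ℕ} (hj0 : 0 < j) (hjN : j < N) : |w j| ≤ (1 + c) * k := by
  rw [h j hj0 hjN]
  calc _ ≤ |splitFluxUpdate lam F₁ F₂ (v (j - 1)) (v j) (v (j + 1))|
          + c * |trapezoidSum Δx v j| := by
        grw [abs_add_le, abs_mul, abs_of_nonneg hc]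
    _ ≤ k + c * k := by
        gcongr
        · exact hS.abs_splitFluxUpdate_le (hv _ (by omega)) (hv _ (by omega)) (hv _ (by omega))
        · exact abs_trapezoidSum_le hΔx hNΔx (by omega) hv hjN.le
    _ = (1 + c) * k := by ring

theorem SchemeStep.discreteTV_le (h : SchemeStep lam F₁ F₂ N c Δx v w)
    (hS : MonotoneFluxSplitting lam F₁ F₂) (hc : 0 ≤ c) (hΔx : 0 ≤ Δx) (hNΔx : N * Δx ≤ 1)
    (hN : 0 < N) (hv : ∀ i ≤ N, |v i| ≤ k) :
    discreteTV N w ≤ discreteTV N v + |w 0 - v 0| + |w N - v N| + 3 * c * k := by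
  set T := trapezoidSum Δx v
  have hinterior : ∀ j, 0 < j → j < N → w j = (fluxStep lam F₁ F₂ N v + c • T) j :=
    fun j hj0 hjN => by
      rw [h j hj0 hjN, Pi.add_apply, fluxStep, if_pos ⟨hj0, hjN⟩, Pi.smul_apply, smul_eq_mul]
  have hT : ∀ j ≤ N, |T j| ≤ k := fun j hj => abs_trapezoidSum_le hΔx hNΔx hN hv hj
  have hboundary : ∀ j, ¬(0 < j ∧ j < N) → j ≤ N →
      |w j - (fluxStep lam F₁ F₂ N v + c • T) j| ≤ |w j - v j| + c * k := fun j hj hjN => by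
    rw [Pi.add_apply, fluxStep, if_neg hj, Pi.smul_apply, smul_eq_mul, ← sub_sub]
    grw [abs_sub, abs_mul, abs_of_nonneg hc, hT j hjN]
  calc discreteTV N w
      ≤ discreteTV N (fluxStep lam F₁ F₂ N v + c • T)
          + |w 0 - (fluxStep lam F₁ F₂ N v + c • T) 0|
          + |w N - (fluxStep lam F₁ F₂ N v + c • T) N| :=
        discreteTV.le_of_eqOn_interior hN hinterior
    _ ≤ (discreteTV N v + c * k) + (|w 0 - v 0| + c * k) + (|w N - v N| + c * k) := by
        gcongr
        · grw [discreteTV.add_le, discreteTV.smul, abs_of_nonneg hc,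
            hS.discreteTV_fluxStep_le, discreteTV_trapezoidSum_le hΔx hNΔx hv]
        · exact hboundary 0 (by omega) N.zero_le
        · exact hboundary N (by omega) le_rfl
    _ = discreteTV N v + |w 0 - v 0| + |w N - v N| + 3 * c * k := by ring

end SchemeStep

open Real in
theorem mul_sum_one_add_pow_le {c : ℝ} (hc : 0 ≤ c) {n m : ℕ} (hnm : n ≤ m) :
    c * ∑ k ∈ range n, (1 + c) ^ k ≤ m * c * exp (m * c) := by
  have hterm : ∀ k ∈ range n, (1 + c) ^ k ≤ exp (m * c) := fun k hk => calc
    (1 + c) ^ k ≤ exp c ^ k := by gcongr; linarith [add_one_le_exp c]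
    _ = exp (k * c) := (exp_nat_mul c k).symm
    _ ≤ exp (m * c) := by
        gcongr
        exact_mod_cast (mem_range.1 hk).le.trans hnm
  calc c * ∑ k ∈ range n, (1 + c) ^ k ≤ c * (n * exp (m * c)) := by
        gcongr
        simpa using sum_le_card_nsmul _ _ _ hterm
    _ ≤ c * (m * exp (m * c)) := by gcongr
    _ = m * c * exp (m * c) := by ring

section Iteration

variable {lam c Δx : ℝ} {F₁ F₂ : ℝ → ℝ} {N M : ℕ} {u : ℕ → ℕ → ℝ}

theorem gridSupNorm_le_pow (hS : MonotoneFluxSplitting lam F₁ F₂) (hc : 0 ≤ c) (hΔx : 0 ≤ Δx)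
    (hNΔx : N * Δx ≤ 1) (hu : ∀ n ≤ M, SchemeStep lam F₁ F₂ N c Δx (u n) (u (n + 1)))
    {A B : ℝ} (hA : ∀ n ≤ M + 1, |u n 0| ≤ A) (hB : ∀ n ≤ M + 1, |u n N| ≤ B) :
    ∀ n ≤ M + 1, gridSupNorm N (u n) ≤ (1 + c) ^ n * (gridSupNorm N (u 0) + A + B) := by
  have hA₀ := (abs_nonneg _).trans (hA 0 M.succ.zero_le)
  have hB₀ := (abs_nonneg _).trans (hB 0 M.succ.zero_le)
  have hK₀ : 0 ≤ gridSupNorm N (u 0) := gridSupNorm_nonneg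
  intro n
  induction n with
  | zero => intro _; linarith [pow_zero (1 + c)]
  | succ n ih =>
    intro hn
    have hboundary : A + B ≤ (1 + c) ^ (n + 1) * (gridSupNorm N (u 0) + A + B) :=
      le_trans (by linarith) (le_mul_of_one_le_left (by positivity) (one_le_pow₀ (by linarith)))
    refine gridSupNorm_le fun j hj => ?_
    rcases Nat.eq_zero_or_pos j with rfl | hj0
    · linarith [hA (n + 1) hn]
    rcases hj.eq_or_lt with rfl | hjN
    · linarith [hB (n + 1) hn]
    calc |u (n + 1) j| ≤ (1 + c) * gridSupNorm N (u n) :=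
          (hu n (by omega)).abs_le hS hc hΔx hNΔx (fun i hi => abs_le_gridSupNorm hi) hj0 hjN
      _ ≤ (1 + c) * ((1 + c) ^ n * (gridSupNorm N (u 0) + A + B)) := by
          gcongr
          exact ih (by omega)
      _ = (1 + c) ^ (n + 1) * (gridSupNorm N (u 0) + A + B) := by ring

theorem discreteTV_le_add_sum_of_schemeStep (hS : MonotoneFluxSplitting lam F₁ F₂) (hc : 0 ≤ c)
    (hΔx : 0 ≤ Δx) (hNΔx : N * Δx ≤ 1) (hN : 0 < N)
    (hu : ∀ n ≤ M, SchemeStep lam F₁ F₂ N c Δx (u n) (u (n + 1))) :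
    ∀ n ≤ M + 1, discreteTV N (u n) ≤ discreteTV N (u 0)
      + ∑ k ∈ range n, |u (k + 1) 0 - u k 0| + ∑ k ∈ range n, |u (k + 1) N - u k N|
      + 3 * c * ∑ k ∈ range n, gridSupNorm N (u k) := by
  intro n
  induction n with
  | zero => intro _; simp
  | succ n ih =>
    intro hn
    have := (hu n (by omega)).discreteTV_le hS hc hΔx hNΔx hN fun i hi => abs_le_gridSupNorm hi
    simp only [sum_range_succ]
    linarith [ih (by omega)]

theorem mul_sum_gridSupNorm_le (hS : MonotoneFluxSplitting lam F₁ F₂) (hc : 0 ≤ c)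
    (hΔx : 0 ≤ Δx) (hNΔx : N * Δx ≤ 1)
    (hu : ∀ n ≤ M, SchemeStep lam F₁ F₂ N c Δx (u n) (u (n + 1))) {A B : ℝ}
    (hA : ∀ n ≤ M + 1, |u n 0| ≤ A) (hB : ∀ n ≤ M + 1, |u n N| ≤ B) {n : ℕ} (hn : n ≤ M + 1) :
    c * ∑ k ∈ range n, gridSupNorm N (u k)
      ≤ (M + 1 : ℕ) * c * Real.exp ((M + 1 : ℕ) * c) * (gridSupNorm N (u 0) + A + B) := by
  have hK := gridSupNorm_le_pow hS hc hΔx hNΔx hu hA hB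
  have hS₀ : 0 ≤ gridSupNorm N (u 0) + A + B :=
    gridSupNorm_nonneg.trans (by simpa using hK 0 (by omega))
  calc c * ∑ k ∈ range n, gridSupNorm N (u k)
      ≤ c * ∑ k ∈ range n, (1 + c) ^ k * (gridSupNorm N (u 0) + A + B) := by
        gcongr with k hk
        exact hK k (by rw [mem_range] at hk; omega)
    _ = (c * ∑ k ∈ range n, (1 + c) ^ k) * (gridSupNorm N (u 0) + A + B) := by
        rw [← sum_mul, mul_assoc]
    _ ≤ _ := mul_le_mul_of_nonneg_right (mul_sum_one_add_pow_le hc hn) hS₀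

theorem discreteTV_le_of_schemeStep (hS : MonotoneFluxSplitting lam F₁ F₂)
    (hc : 0 ≤ c) (hΔx : 0 ≤ Δx) (hNΔx : N * Δx ≤ 1) (hN : 0 < N)
    (hu : ∀ n ≤ M, SchemeStep lam F₁ F₂ N c Δx (u n) (u (n + 1))) {A B Vα Vβ : ℝ}
    (hA : ∀ n ≤ M + 1, |u n 0| ≤ A) (hB : ∀ n ≤ M + 1, |u n N| ≤ B)
    (hVα : ∑ n ∈ range (M + 1), |u (n + 1) 0 - u n 0| ≤ Vα)
    (hVβ : ∑ n ∈ range (M + 1), |u (n + 1) N - u n N| ≤ Vβ) {n : ℕ} (hn : n ≤ M + 1) :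
    discreteTV N (u n) ≤ discreteTV N (u 0) + Vα + Vβ
      + 3 * ((M + 1 : ℕ) * c * Real.exp ((M + 1 : ℕ) * c)) * (gridSupNorm N (u 0) + A + B) := by
  have hleft : ∑ k ∈ range n, |u (k + 1) 0 - u k 0| ≤ Vα :=
    (sum_le_sum_of_subset_of_nonneg (range_subset_range.2 hn) fun _ _ _ => abs_nonneg _).trans hVα
  have hright : ∑ k ∈ range n, |u (k + 1) N - u k N| ≤ Vβ :=
    (sum_le_sum_of_subset_of_nonneg (range_subset_range.2 hn) fun _ _ _ => abs_nonneg _).trans hVβ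
  linarith [discreteTV_le_add_sum_of_schemeStep hS hc hΔx hNΔx hN hu n hn,
    mul_sum_gridSupNorm_le hS hc hΔx hNΔx hu hA hB hn]

end Iteration

/-- Discrete BV bound (Lemma 3.2): with `C_T = max (1, 3 γ T e^{γT})`, a constant
depending only on `γ` and `T`, for every `n ≤ M + 1` the solution of the scheme
satisfies `|uⁿ|_{BV} ≤ C_T (|u⁰|_{BV} + V_α + V_β + ‖u⁰‖_∞ + A + B)`. -/
theorem stmt_5 (N M : ℕ) (hN : 3 ≤ N) (T γ Δx Δt lam : ℝ)
    (hT : 0 < T) (hγ : 0 < γ)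
    (hΔx : Δx = 1 / N) (hΔt : Δt = T / (M + 1)) (hlam : lam = Δt / Δx)
    (F₁ F₂ : ℝ → ℝ) (hF₁ : ContDiff ℝ 1 F₁) (hF₂ : ContDiff ℝ 1 F₂)
    (hmono₁ : ∀ w, 0 ≤ deriv F₁ w) (hmono₂ : ∀ w, deriv F₂ w ≤ 0)
    (hCFL : ∀ w, lam * (deriv F₁ w - deriv F₂ w) ≤ 1)
    (u : ℕ → ℕ → ℝ) (P : ℕ → ℕ → ℝ)
    (hP : ∀ n j, P n j = Δx * (u n 0 / 2 + ∑ i ∈ Finset.Ico 1 j, u n i + u n j / 2))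
    (hscheme : ∀ n, n ≤ M → ∀ j, 1 ≤ j → j ≤ N - 1 →
      u (n + 1) j = u n j
        - lam * ((F₁ (u n j) + F₂ (u n (j + 1))) - (F₁ (u n (j - 1)) + F₂ (u n j)))
        + γ * Δt * P n j)
    (A B Vα Vβ : ℝ) (hA : 0 ≤ A) (hB : 0 ≤ B) (hVα : 0 ≤ Vα) (hVβ : 0 ≤ Vβ)
    (hbdL : ∀ n, n ≤ M + 1 → |u n 0| ≤ A)
    (hbdR : ∀ n, n ≤ M + 1 → |u n N| ≤ B)
    (hbvL : ∑ n ∈ Finset.range (M + 1), |u (n + 1) 0 - u n 0| ≤ Vα)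
    (hbvR : ∑ n ∈ Finset.range (M + 1), |u (n + 1) N - u n N| ≤ Vβ) :
    ∀ n, n ≤ M + 1 →
      ∑ j ∈ Finset.range N, |u n (j + 1) - u n j|
        ≤ max 1 (3 * γ * T * Real.exp (γ * T)) *
          ((∑ j ∈ Finset.range N, |u 0 (j + 1) - u 0 j|) + Vα + Vβ
            + (Finset.range (N + 1)).sup' Finset.nonempty_range_add_one (fun j => |u 0 j|)
            + A + B) := by
  intro n hn
  have hΔx₀ : 0 ≤ Δx := by rw [hΔx]; positivity
  have hNΔx : (N : ℝ) * Δx ≤ 1 := by rw [hΔx, mul_one_div_cancel (by positivity)]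
  have hc : 0 ≤ γ * Δt := by rw [hΔt]; positivity
  have hcT : ((M + 1 : ℕ) : ℝ) * (γ * Δt) = γ * T := by rw [hΔt]; push_cast; field_simp
  have hS : MonotoneFluxSplitting lam F₁ F₂ :=
    .of_deriv (by rw [hlam, hΔt, hΔx]; positivity) (hF₁.differentiable one_ne_zero)
      (hF₂.differentiable one_ne_zero) hmono₁ hmono₂ hCFL
  have hstep : ∀ n ≤ M, SchemeStep lam F₁ F₂ N (γ * Δt) Δx (u n) (u (n + 1)) :=
    fun n hn j hj₀ hjN => by rw [hscheme n hn j hj₀ (by omega), hP]; rfl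
  have hTV := discreteTV_le_of_schemeStep hS hc hΔx₀ hNΔx (by omega) hstep hbdL hbdR
    hbvL hbvR hn
  rw [hcT] at hTV
  have hX : 0 ≤ discreteTV N (u 0) + Vα + Vβ := by linarith [discreteTV.nonneg (N := N) (u 0)]
  have hY : 0 ≤ gridSupNorm N (u 0) + A + B := by linarith [gridSupNorm_nonneg (N := N) (v := u 0)]
  calc discreteTV N (u n)
      ≤ (discreteTV N (u 0) + Vα + Vβ)
        + 3 * γ * T * Real.exp (γ * T) * (gridSupNorm N (u 0) + A + B) := by linarith
    _ ≤ max 1 (3 * γ * T * Real.exp (γ * T)) * (discreteTV N (u 0) + Vα + Vβ)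
        + max 1 (3 * γ * T * Real.exp (γ * T)) * (gridSupNorm N (u 0) + A + B) := by
        gcongr
        · exact le_mul_of_one_le_left hX (le_max_left _ _)
        · exact le_max_right _ _
    _ = _ := by simp only [discreteTV, gridSupNorm]; ring
end
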